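/- Let G = G_{J_1} ∘ ⋯ ∘ G_{J_m} be a star network, let I be an ordered set partition of [n] of type λ, and let U ∈ U_I(G). Then incross(U) = incross(δ(U)) + cdncross(δ(U)). -/

import Mathlib

/- Common combinatorial setup: star networks, covering path families,
   crossing/noncrossing statistics, and the base ring ℤ[q^{1/2},q^{-1/2}]. -/

open Equiv Finset
open scoped Classical

noncomputable section

/-- The ring `ℤ[q^{1/2}, q^{-1/2}]`, realized as Laurent polynomials in the
variable `q^{1/2}` (so the exponent-`k` monomial is `q^{k/2}`). -/
abbrev R2 : Type := LaurentPolynomial ℤ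

/-- `q^{k/2}`. -/
def Qp (k : ℤ) : R2 := LaurentPolynomial.T k

/-- `q`. -/
def qq : R2 := LaurentPolynomial.T 2

/-- Coxeter length of a permutation, i.e. its inversion number. -/
def len {n : ℕ} (w : Perm (Fin n)) : ℕ :=
  ((univ : Finset (Fin n × Fin n)).filter fun p => p.1 < p.2 ∧ w p.2 < w p.1).card

/-- Membership in the interval `J = [a,b] ⊆ [n]`. -/
def memJ {n : ℕ} (J : Fin n × Fin n) (i : Fin n) : Prop := J.1 ≤ i ∧ i ≤ J.2

/-- Membership in the subgroup `S_J ≤ S_n` generated by the adjacent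
transpositions `s_a, …, s_{b-1}` of the interval `J = [a,b]`; equivalently,
the permutations supported on `[a,b]`. -/
def inSJ {n : ℕ} (J : Fin n × Fin n) (w : Perm (Fin n)) : Prop :=
  ∀ i, w i ≠ i → memJ J i

/-- A path family covering the star network `G_{J_1} ∘ ⋯ ∘ G_{J_m}` is
faithfully encoded by the permutation of the wire positions realized at each
simple-star factor: at factor `p` the paths whose current positions lie in
`J_p` pass through the central vertex and are permuted arbitrarily within
`J_p` (every entering and leaving edge being used exactly once), while all
other paths use their unique horizontal edge.  Thus a covering family is a
sequence `vs` of permutations with `vs p` supported on `J_p`. -/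
def IsPathFamily {n m : ℕ} (Js : Fin m → Fin n × Fin n)
    (vs : Fin m → Perm (Fin n)) : Prop :=
  ∀ p, inSJ (Js p) (vs p)

/-- The position of the path starting at source `i` just before factor `k`
(as a permutation of sources). -/
def posAt {n m : ℕ} (vs : Fin m → Perm (Fin n)) (k : ℕ) : Perm (Fin n) :=
  (((List.ofFn vs).take k).reverse).prod

/-- The type of a covering path family: the path starting at source `i`
terminates at sink `typeOf vs i`. -/
def typeOf {n m : ℕ} (vs : Fin m → Perm (Fin n)) : Perm (Fin n) := posAt vs m

/-- The path from source `i` passes through the central vertex of the factor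
`G_{J_p}`. -/
def centeredAt {n m : ℕ} (Js : Fin m → Fin n × Fin n) (vs : Fin m → Perm (Fin n))
    (p : Fin m) (i : Fin n) : Prop :=
  (Js p).1 < (Js p).2 ∧ memJ (Js p) (posAt vs p i)

/-- The paths from sources `i` and `j` both pass through the central vertex of
the factor `G_{J_p}`. -/
def meetAt {n m : ℕ} (Js : Fin m → Fin n × Fin n) (vs : Fin m → Perm (Fin n))
    (p : Fin m) (i j : Fin n) : Prop :=
  centeredAt Js vs p i ∧ centeredAt Js vs p j

/-- The triple `(π_i, π_j, p)` is a crossing: the two paths intersect at the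
central vertex of `G_{J_p}` and cross there. -/
def crossingAt {n m : ℕ} (Js : Fin m → Fin n × Fin n) (vs : Fin m → Perm (Fin n))
    (p : Fin m) (i j : Fin n) : Prop :=
  meetAt Js vs p i j ∧
    ¬ ((posAt vs p i < posAt vs p j) ↔ (posAt vs (p.1 + 1) i < posAt vs (p.1 + 1) j))

/-- `cross(π)`: the number of crossings of the path family. -/
def crossNum {n m : ℕ} (Js : Fin m → Fin n × Fin n)
    (vs : Fin m → Perm (Fin n)) : ℕ :=
  ((univ : Finset ((Fin n × Fin n) × Fin m)).filter fun x =>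
    x.1.1 < x.1.2 ∧ crossingAt Js vs x.2 x.1.1 x.1.2).card

/-- The triple `(π_i, π_j, p)` is a noncrossing with `π_i` entering and
leaving the central vertex of `G_{J_p}` below `π_j`. -/
def noncrossBelow {n m : ℕ} (Js : Fin m → Fin n × Fin n) (vs : Fin m → Perm (Fin n))
    (p : Fin m) (i j : Fin n) : Prop :=
  meetAt Js vs p i j ∧
    posAt vs p i < posAt vs p j ∧ posAt vs (p.1 + 1) i < posAt vs (p.1 + 1) j

/-- `incross(U)` for a tableau `U` containing the paths of `π`, recorded via
the function `col` assigning to each path (index) the index of the column of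
`U` containing it: the number of inverted noncrossings, i.e. noncrossings
`(π_i, π_j, p)` (with `π_i` below `π_j`) such that `π_j` lies in an earlier
column of `U` than `π_i`. -/
def incrossNum {n m : ℕ} (Js : Fin m → Fin n × Fin n) (vs : Fin m → Perm (Fin n))
    (col : Fin n → ℕ) : ℕ :=
  ((univ : Finset ((Fin n × Fin n) × Fin m)).filter fun x =>
    noncrossBelow Js vs x.2 x.1.1 x.1.2 ∧ col x.1.2 < col x.1.1).card

/-- The number of crossings of the two paths `π_i, π_j` strictly before the
factor `G_{J_p}`. -/
def crossBefore {n m : ℕ} (Js : Fin m → Fin n × Fin n) (vs : Fin m → Perm (Fin n))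
    (p : Fin m) (i j : Fin n) : ℕ :=
  ((univ : Finset (Fin m)).filter fun k => k < p ∧ crossingAt Js vs k i j).card

/-- The triple `(π_i, π_j, p)` is defective: the paths meet at the central
vertex of `G_{J_p}` having previously crossed an odd number of times. -/
def defectiveAt {n m : ℕ} (Js : Fin m → Fin n × Fin n) (vs : Fin m → Perm (Fin n))
    (p : Fin m) (i j : Fin n) : Prop :=
  meetAt Js vs p i j ∧ Odd (crossBefore Js vs p i j)

/-- `dfct(π)`: the number of defective triples of the path family. -/
def dfctNum {n m : ℕ} (Js : Fin m → Fin n × Fin n)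
    (vs : Fin m → Perm (Fin n)) : ℕ :=
  ((univ : Finset ((Fin n × Fin n) × Fin m)).filter fun x =>
    x.1.1 < x.1.2 ∧ defectiveAt Js vs x.2 x.1.1 x.1.2).card

/-- `cdncross(W)`: the number of defective noncrossings between pairs of
paths appearing in the same column of the tableau recorded by `col`. -/
def cdncrossNum {n m : ℕ} (Js : Fin m → Fin n × Fin n) (vs : Fin m → Perm (Fin n))
    (col : Fin n → ℕ) : ℕ :=
  ((univ : Finset ((Fin n × Fin n) × Fin m)).filter fun x =>
    x.1.1 < x.1.2 ∧ defectiveAt Js vs x.2 x.1.1 x.1.2 ∧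
      ¬ crossingAt Js vs x.2 x.1.1 x.1.2 ∧ col x.1.1 = col x.1.2).card

/-- The adjacent transposition `s_{i+1}` (0-indexed: swaps positions `i` and
`i+1`). -/
def swp {n : ℕ} (i : ℕ) (h : i + 1 < n) : Perm (Fin n) :=
  Equiv.swap ⟨i, by omega⟩ ⟨i + 1, h⟩

end
/- Young subgroups, minimal coset representatives, the induced sign character
`ε_q^λ`, and column-strict tableaux (encoded by column assignments). -/

noncomputable section
open Equiv Finset
open scoped Classical

/-- Given a composition `lam = (λ_1, …, λ_r)` of `n`, the index of the block
`B_k = [λ_1 + ⋯ + λ_{k-1} + 1, λ_1 + ⋯ + λ_k]` containing the (0-indexed)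
position `i`. -/
def blockIdx (lam : List ℕ) (i : ℕ) : ℕ :=
  ((List.range lam.length).filter fun k => (lam.take (k + 1)).sum ≤ i).length

/-- Membership in the Young subgroup `S_λ`: the permutations preserving each
block `B_k`. -/
def inYoung {n : ℕ} (lam : List ℕ) (w : Perm (Fin n)) : Prop :=
  ∀ i : Fin n, blockIdx lam ((w i : Fin n) : ℕ) = blockIdx lam (i : ℕ)

/-- `u` is the minimum-length representative of its coset `S_λ u`
(in the paper's conventions, of the left coset `u S_λ` used in the
factorization `w = w_- w^*`): `u` has no inversions whose two values lie in a
common block. -/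
def isMinRep {n : ℕ} (lam : List ℕ) (u : Perm (Fin n)) : Prop :=
  ∀ i j : Fin n, i < j →
    blockIdx lam ((u i : Fin n) : ℕ) = blockIdx lam ((u j : Fin n) : ℕ) →
      u i < u j

/-- The induced sign character `ε_q^λ = sgn ↑_{H_λ(q)}^{H_n(q)}`, computed in
the natural basis: `H_n(q)` is a free right `H_λ(q)`-module with basis
`{T_u}` indexed by the minimum-length coset representatives, every basis
element factors as `T_{τ∘u} = T_u T_τ` with `τ ∈ S_λ`, the sign character
sends `T_τ` to `(-1)^{ℓ(τ)}`, and the character of the induced module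
`H_n(q) ⊗_{H_λ(q)} sgn` is obtained by summing the diagonal coefficients. -/
def epsChar {n : ℕ} {H : Type*} [Ring H] [Algebra R2 H] (lam : List ℕ)
    (T : Module.Basis (Perm (Fin n)) R2 H) (h : H) : R2 :=
  ∑ u ∈ (univ : Finset (Perm (Fin n))).filter (fun u => isMinRep lam u),
    ∑ τ ∈ (univ : Finset (Perm (Fin n))).filter (fun τ => inYoung lam τ),
      (-1 : R2) ^ len τ * T.repr (h * T u) (τ * u)

/-- A column-strict tableau of shape `λᵗ` (whose columns therefore have
lengths `λ_1, …, λ_r`) filled with the paths of a covering path family of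
type `typeOf vs`, encoded by the assignment `f` sending each path to the
index of its column: column `k` must have `λ_k` entries, and since the
entries of a column are arranged bottom-to-top in increasing order of source
index, column-strictness says that the sink indices of the paths in a common
column also increase with the source indices. -/
def IsColStrictAssign {n m : ℕ} (lam : List ℕ) (vs : Fin m → Perm (Fin n))
    (f : Fin n → Fin lam.length) : Prop :=
  (∀ k : Fin lam.length,
      ((univ : Finset (Fin n)).filter fun i => f i = k).card = lam.get k) ∧
    ∀ i j : Fin n, f i = f j → i < j → typeOf vs i < typeOf vs j

end
/- The data of the involution ζ on the tableau set T_I.  An ordered set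
partition `I = (I_1, …, I_r)` of `[n]` of type `λ` is encoded by the
permutation `u = u(I)` (increasing on each block `B_k`, with `I_k = u(B_k)`);
an element `U(π, u, yu)` of `U_I(G)` is encoded by the covering path family
`π` (with `typeOf π = u ∘ y ∘ u⁻¹` for some `y ∈ S_λ`); its image
`W = δ(U(π,u,yu)) ∈ T_I(G)` is the tableau of shape `λᵗ` whose `k`-th column
contains the paths with sources in `I_k`, so the column of the path `i` in
`W` is `colOf lam u i`. -/

noncomputable section
open Equiv Finset
open scoped Classical

/-- The column of the path `π_i` in the tableau `δ(U(π,u,yu)) ∈ T_I`. -/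
def colOf {n : ℕ} (lam : List ℕ) (u : Perm (Fin n)) (i : Fin n) : ℕ :=
  blockIdx lam ((u⁻¹ i : Fin n) : ℕ)

/-- Column `c` of the tableau `δ(U(π,u,yu))` is column-strict: its sink
indices increase (bottom to top) together with its source indices. -/
def colStrictCol {n m : ℕ} (lam : List ℕ) (u : Perm (Fin n))
    (vs : Fin m → Perm (Fin n)) (c : ℕ) : Prop :=
  ∀ i i' : Fin n, colOf lam u i = c → colOf lam u i' = c → i < i' →
    typeOf vs i < typeOf vs i'

/-- The path family obtained by swapping the terminal subpaths of the paths
from sources `i` and `i'`, beginning at the central vertex of the factor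
`G_{J_p}`: the permutation realized at factor `p` is composed with the
transposition of the two leaving positions. -/
def zetaSwap {n m : ℕ} (vs : Fin m → Perm (Fin n)) (p : Fin m)
    (i i' : Fin n) : Fin m → Perm (Fin n) :=
  fun k => if k = p then
    Equiv.swap (posAt vs (p.1 + 1) i) (posAt vs (p.1 + 1) i') * vs p
  else vs k

/-- The data entering the definition of the involution `ζ = ζ_I` at a
non-column-strict tableau `W = δ(U(π,u,yu)) ∈ T_I(G)`:
`tc` is the greatest index of a non-column-strict column of `W`; `p` is the
greatest index such that at least two paths of column `tc` pass through the
interior vertex of `G_{J_p}`; and `j, j'` are the two positions in block `tc`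
whose paths `π_{u_j}, π_{u_{j'}}` (through that vertex) have the
right-to-left lexicographically greatest pair of sink indices, normalized so
that the sink of `π_{u_{j'}}` is the larger.  Then `ζ(W)` is obtained from
`W` by replacing `π` with `zetaSwap vs p (u j) (u j')`. -/
structure ZetaData {n m : ℕ} (Js : Fin m → Fin n × Fin n) (lam : List ℕ)
    (u : Perm (Fin n)) (vs : Fin m → Perm (Fin n)) : Type where
  tc : ℕ
  p : Fin m
  j : Fin n
  j' : Fin n
  htc : ¬ colStrictCol lam u vs tc
  htcMax : ∀ c : ℕ, tc < c → colStrictCol lam u vs c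
  hpMeet : ∃ i i' : Fin n, i ≠ i' ∧ colOf lam u i = tc ∧ colOf lam u i' = tc ∧
    centeredAt Js vs p i ∧ centeredAt Js vs p i'
  hpMax : ∀ p' : Fin m, p < p' →
    ¬ ∃ i i' : Fin n, i ≠ i' ∧ colOf lam u i = tc ∧ colOf lam u i' = tc ∧
      centeredAt Js vs p' i ∧ centeredAt Js vs p' i'
  hne : j ≠ j'
  hjcol : blockIdx lam (j : ℕ) = tc
  hjcol' : blockIdx lam (j' : ℕ) = tc
  hjcent : centeredAt Js vs p (u j)
  hjcent' : centeredAt Js vs p (u j')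
  hord : typeOf vs (u j) < typeOf vs (u j')
  hmax : ∀ k k' : Fin n, k ≠ k' →
    blockIdx lam (k : ℕ) = tc → blockIdx lam (k' : ℕ) = tc →
    centeredAt Js vs p (u k) → centeredAt Js vs p (u k') →
    typeOf vs (u k) < typeOf vs (u k') →
    (typeOf vs (u k') < typeOf vs (u j') ∨
      (k' = j' ∧ typeOf vs (u k) ≤ typeOf vs (u j)))

/-- The number `b` of paths of `π` which enter the factor `G_{J_p}` between
the paths from sources `i` and `i'`, and which also leave `G_{J_p}` between
the same two paths. -/
def betweenNum {n m : ℕ} (Js : Fin m → Fin n × Fin n) (vs : Fin m → Perm (Fin n))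
    (p : Fin m) (i i' : Fin n) : ℕ :=
  ((univ : Finset (Fin n)).filter fun x =>
    x ≠ i ∧ x ≠ i' ∧ centeredAt Js vs p x ∧
      (min (posAt vs p i) (posAt vs p i') < posAt vs p x ∧
        posAt vs p x < max (posAt vs p i) (posAt vs p i')) ∧
      (min (posAt vs (p.1 + 1) i) (posAt vs (p.1 + 1) i') < posAt vs (p.1 + 1) x ∧
        posAt vs (p.1 + 1) x < max (posAt vs (p.1 + 1) i) (posAt vs (p.1 + 1) i'))).card

end

/-! In the one-row tableau `U` the path `π_i` sits in column `u⁻¹ i`, in `δ(U)` in the block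
containing `u⁻¹ i`, and blocks are intervals. Hence an inverted noncrossing of `U` is either an
inverted noncrossing of `δ(U)` or joins two paths of one column of `δ(U)`. Since `u` increases
on each block, in the latter case the path passing below has the larger source; as two paths are
in source order exactly when they have crossed an even number of times, these are precisely the
defective noncrossings within columns of `δ(U)`. -/

noncomputable section
open Equiv Finset
open scoped Classical

namespace inSJ

variable {n : ℕ} {J : Fin n × Fin n} {σ : Perm (Fin n)}

theorem memJ_apply (hσ : inSJ J σ) {x : Fin n} (hx : σ x ≠ x) : memJ J (σ x) :=
  hσ (σ x) fun h => hx (σ.injective h)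

theorem lt_iff_of_not_central (hσ : inSJ J σ) {x : Fin n} (hx : ¬ (J.1 < J.2 ∧ memJ J x))
    (y : Fin n) : (σ x < σ y ↔ x < y) ∧ (σ y < σ x ↔ y < x) := by
  have hmoved : ∀ z, σ z ≠ z → J.1 < J.2 ∧ memJ J z ∧ memJ J (σ z) := by
    intro z hz
    have hz' := hσ z hz
    have hσz := hσ.memJ_apply hz
    refine ⟨?_, hz', hσz⟩
    simp only [memJ, Fin.le_def, Fin.lt_def, ← Fin.val_ne_iff] at *
    omega
  have hxfix : σ x = x := by
    by_contra h
    obtain ⟨hJ, hxJ, -⟩ := hmoved x h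
    exact hx ⟨hJ, hxJ⟩
  rw [hxfix]
  rcases eq_or_ne (σ y) y with hyfix | hy
  · rw [hyfix]
    exact ⟨Iff.rfl, Iff.rfl⟩
  · obtain ⟨hJ, hyJ, hσyJ⟩ := hmoved y hy
    simp only [memJ, Fin.le_def, Fin.lt_def, not_and, not_le] at hx hyJ hσyJ hJ ⊢
    omega

end inSJ

section PathFamily

variable {n m : ℕ} {Js : Fin m → Fin n × Fin n} {vs : Fin m → Perm (Fin n)}

theorem posAt_zero (vs : Fin m → Perm (Fin n)) : posAt vs 0 = 1 := by
  simp [posAt]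

theorem posAt_succ (vs : Fin m → Perm (Fin n)) (p : Fin m) :
    posAt vs (p.1 + 1) = vs p * posAt vs p := by
  rw [posAt, List.take_add_one, List.reverse_append, List.prod_append]
  simp [posAt]

theorem crossingAt_comm (p : Fin m) (i j : Fin n) :
    crossingAt Js vs p i j ↔ crossingAt Js vs p j i := by
  rcases eq_or_ne i j with rfl | hij
  · rfl
  have h₀ : posAt vs p i ≠ posAt vs p j := (posAt vs p).injective.ne hij
  have h₁ : posAt vs (p.1 + 1) i ≠ posAt vs (p.1 + 1) j :=
    (posAt vs (p.1 + 1)).injective.ne hij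
  simp only [crossingAt, meetAt, and_comm (a := centeredAt Js vs p i), lt_iff_le_and_ne]
  grind

theorem crossBefore_comm (p : Fin m) (i j : Fin n) :
    crossBefore Js vs p i j = crossBefore Js vs p j i := by
  simp only [crossBefore, crossingAt_comm _ i j]

theorem crossBefore_succ (p : Fin m) (hp : p.1 + 1 < m) (i j : Fin n) :
    crossBefore Js vs ⟨p.1 + 1, hp⟩ i j =
      crossBefore Js vs p i j + if crossingAt Js vs p i j then 1 else 0 := by
  have hsplit : (univ.filter fun q => q < (⟨p.1 + 1, hp⟩ : Fin m) ∧ crossingAt Js vs q i j) =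
      (univ.filter fun q => q < p ∧ crossingAt Js vs q i j) ∪
        (univ.filter fun q => q = p ∧ crossingAt Js vs q i j) := by
    ext q
    simp only [mem_filter, mem_univ, true_and, mem_union, Fin.lt_def, Fin.ext_iff]
    grind
  rw [crossBefore, hsplit, card_union_of_disjoint (disjoint_filter.2 fun q _ h h' => h.1.ne h'.1)]
  by_cases hc : crossingAt Js vs p i j <;> simp [crossBefore, filter_and, filter_eq', hc]

theorem posAt_succ_lt_iff (hvs : IsPathFamily Js vs) (p : Fin m) (i j : Fin n) :
    posAt vs (p.1 + 1) i < posAt vs (p.1 + 1) j ↔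
      (posAt vs p i < posAt vs p j ↔ ¬ crossingAt Js vs p i j) := by
  by_cases hmeet : meetAt Js vs p i j
  · simp only [crossingAt, hmeet, true_and, not_not]
    tauto
  · have hnc : ¬ crossingAt Js vs p i j := fun h => hmeet h.1
    simp only [hnc, not_false_iff, iff_true, posAt_succ vs p, Perm.mul_apply]
    rcases not_and_or.1 hmeet with hi | hj
    · exact ((hvs p).lt_iff_of_not_central hi _).1
    · exact ((hvs p).lt_iff_of_not_central hj _).2

theorem posAt_lt_iff_even_crossBefore (hvs : IsPathFamily Js vs) (p : Fin m) (i j : Fin n) :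
    posAt vs p i < posAt vs p j ↔ (i < j ↔ Even (crossBefore Js vs p i j)) := by
  obtain ⟨k, hk⟩ := p
  induction k with
  | zero =>
    have h0 : crossBefore Js vs ⟨0, hk⟩ i j = 0 := by simp [crossBefore, Fin.lt_def]
    simp [posAt_zero, h0]
  | succ k ih =>
    specialize ih (by omega)
    rw [crossBefore_succ ⟨k, by omega⟩ hk]
    have hstep := posAt_succ_lt_iff hvs ⟨k, by omega⟩ i j
    simp only at hstep ih ⊢
    rw [hstep, ih]
    by_cases hc : crossingAt Js vs ⟨k, by omega⟩ i j <;>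
      simp only [hc, if_true, if_false, Nat.even_add_one, add_zero, not_true, not_false_iff] <;>
      tauto

theorem noncrossBelow_iff_defectiveAt (hvs : IsPathFamily Js vs) (p : Fin m) {i j : Fin n}
    (hji : j < i) :
    noncrossBelow Js vs p i j ↔ defectiveAt Js vs p j i ∧ ¬ crossingAt Js vs p j i := by
  have hparity := posAt_lt_iff_even_crossBefore hvs p i j
  rw [iff_false_intro hji.not_gt, crossBefore_comm, false_iff, Nat.not_even_iff_odd] at hparity
  have h₀ : posAt vs p j < posAt vs p i ↔ ¬ posAt vs p i < posAt vs p j :=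
    (not_lt.trans ((posAt vs p).injective.ne hji.ne).le_iff_lt).symm
  have h₁ : posAt vs (p.1 + 1) j < posAt vs (p.1 + 1) i ↔
      ¬ posAt vs (p.1 + 1) i < posAt vs (p.1 + 1) j :=
    (not_lt.trans ((posAt vs (p.1 + 1)).injective.ne hji.ne).le_iff_lt).symm
  simp only [noncrossBelow, defectiveAt, crossingAt, meetAt, h₀, h₁, ← hparity]
  tauto

end PathFamily

theorem blockIdx_mono (lam : List ℕ) : Monotone (blockIdx lam) := by
  intro a b hab
  apply List.Sublist.length_le
  apply List.monotone_filter_right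
  intro k hk
  simp only [decide_eq_true_eq] at *
  omega

section Tableau

variable {n m : ℕ} {Js : Fin m → Fin n × Fin n} {vs : Fin m → Perm (Fin n)}

theorem incrossNum_eq_incrossNum_comp_add {f : ℕ → ℕ} (hf : Monotone f) (c : Fin n → ℕ) :
    incrossNum Js vs c = incrossNum Js vs (f ∘ c) +
      #{x : (Fin n × Fin n) × Fin m | noncrossBelow Js vs x.2 x.1.1 x.1.2 ∧
        f (c x.1.1) = f (c x.1.2) ∧ c x.1.2 < c x.1.1} := by
  rw [incrossNum, incrossNum, ← card_union_of_disjoint]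
  · congr 1
    ext x
    simp only [mem_filter, mem_univ, true_and, mem_union, Function.comp_apply]
    have hreflect := hf.reflect_lt (a := c x.1.2) (b := c x.1.1)
    have hmono := @hf (c x.1.2) (c x.1.1)
    grind
  · refine disjoint_filter.2 fun x _ h h' => ?_
    exact h.2.ne h'.2.1.symm

theorem card_noncrossBelow_sameCol_eq_cdncrossNum (hvs : IsPathFamily Js vs) (g c : Fin n → ℕ)
    (hgc : ∀ i j, g i = g j → (c i < c j ↔ i < j)) :
    #{x : (Fin n × Fin n) × Fin m | noncrossBelow Js vs x.2 x.1.1 x.1.2 ∧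
        g x.1.1 = g x.1.2 ∧ c x.1.2 < c x.1.1} = cdncrossNum Js vs g := by
  refine card_nbij' (fun x => ((x.1.2, x.1.1), x.2)) (fun x => ((x.1.2, x.1.1), x.2)) ?_ ?_
    (fun _ _ => rfl) (fun _ _ => rfl)
  · rintro ⟨⟨i, j⟩, p⟩ hx
    simp only [coe_filter, Set.mem_ofPred_eq, mem_univ, true_and] at hx ⊢
    obtain ⟨hnb, hg, hc⟩ := hx
    have hji : j < i := (hgc j i hg.symm).1 hc
    obtain ⟨hdef, hnc⟩ := (noncrossBelow_iff_defectiveAt hvs p hji).1 hnb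
    exact ⟨hji, hdef, hnc, hg.symm⟩
  · rintro ⟨⟨i, j⟩, p⟩ hx
    simp only [coe_filter, Set.mem_ofPred_eq, mem_univ, true_and] at hx ⊢
    obtain ⟨hij, hdef, hnc, hg⟩ := hx
    exact ⟨(noncrossBelow_iff_defectiveAt hvs p hij).2 ⟨hdef, hnc⟩, hg.symm, (hgc i j hg).2 hij⟩

end Tableau

theorem incross_delta_decomposition_general
    {n m : ℕ} (Js : Fin m → Fin n × Fin n)
    (lam : List ℕ)
    (u : Perm (Fin n))
    (hu : ∀ i j : Fin n, i < j →
      blockIdx lam (i : ℕ) = blockIdx lam (j : ℕ) → u i < u j)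
    (vs : Fin m → Perm (Fin n)) (hvs : IsPathFamily Js vs) :
    incrossNum Js vs (fun i => ((u⁻¹ i : Fin n) : ℕ)) =
      incrossNum Js vs (colOf lam u) + cdncrossNum Js vs (colOf lam u) := by
  have hcol : ∀ i j, colOf lam u i = colOf lam u j →
      (((u⁻¹ i : Fin n) : ℕ) < u⁻¹ j ↔ i < j) := by
    intro i j hij
    have hmono : StrictMonoOn u {a | blockIdx lam a = colOf lam u j} :=
      fun a ha b hb hab => hu a b hab (ha.trans hb.symm)
    simpa using (hmono.lt_iff_lt hij rfl).symm
  rw [incrossNum_eq_incrossNum_comp_add (blockIdx_mono lam)]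
  exact congrArg (incrossNum Js vs (colOf lam u) + ·)
    (card_noncrossBelow_sameCol_eq_cdncrossNum hvs (colOf lam u) _ hcol)

/-- Lemma 5.1 / `l:TU`.  Let `G = G_{J_1} ∘ ⋯ ∘ G_{J_m}`
be a star network, `I` an ordered set partition of `[n]` of type `λ`
(encoded by the permutation `u = u(I)`, increasing on each block `B_k`, with
`I_k = u(B_k)`), and `U = U(π,u,yu) ∈ U_I(G)` (so `π` covers `G`, `y ∈ S_λ`,
and `typeOf π = u ∘ y ∘ u⁻¹`).  Then
`incross(U) = incross(δ(U)) + cdncross(δ(U))`: in the one-row tableau `U` the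
column of `π_i` is `u⁻¹(i)`, while in `δ(U) ∈ T_I(G)` it is `colOf lam u i`. -/
theorem incross_delta_decomposition
    {n m : ℕ} (Js : Fin m → Fin n × Fin n) (hJs : ∀ p, (Js p).1 ≤ (Js p).2)
    (lam : List ℕ) (hsum : lam.sum = n) (hpos : ∀ x ∈ lam, 0 < x)
    (hsort : lam.Pairwise (fun a b => b ≤ a))
    (u : Perm (Fin n))
    (hu : ∀ i j : Fin n, i < j →
      blockIdx lam (i : ℕ) = blockIdx lam (j : ℕ) → u i < u j)
    (vs : Fin m → Perm (Fin n)) (hvs : IsPathFamily Js vs)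
    (y : Perm (Fin n)) (hy : inYoung lam y)
    (hty : typeOf vs = u * y * u⁻¹) :
    incrossNum Js vs (fun i => ((u⁻¹ i : Fin n) : ℕ)) =
      incrossNum Js vs (colOf lam u) + cdncrossNum Js vs (colOf lam u) :=
  incross_delta_decomposition_general Js lam u hu vs hvs

end
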